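/- Let a(n) be defined by ∑_{n≥0} a(n) qⁿ = (−q;q)∞²/(q;q)∞ and let ω_n be the n-th generalized pentagonal number (ω_{2m} = m(3m+1)/2, ω_{2m−1} = m(3m−1)/2). Then a(ω_n) ≡ 1 (mod 4) if n ≡ 0 or 3 (mod 4), and a(ω_n) ≡ 3 (mod 4) if n ≡ 1 or 2 (mod 4). -/

import Mathlib

open PowerSeries Finset

/-- The power series `∏_{k=0}^∞ g k`, defined coefficientwise via stabilized
finite partial products (valid when `g k ≡ 1` modulo degree `> k`). -/
noncomputable def iProd (g : ℕ → PowerSeries ℤ) : PowerSeries ℤ :=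
  PowerSeries.mk fun n => PowerSeries.coeff n (∏ k ∈ Finset.range (n + 1), g k)

/-- `(q^j; q^j)_∞ = ∏_{k≥1} (1 - q^{jk})` as a formal power series. -/
noncomputable def F (j : ℕ) : PowerSeries ℤ :=
  iProd fun k => 1 - (PowerSeries.X : PowerSeries ℤ) ^ (j * (k + 1))

/-- `(-q; q)_∞ = ∏_{k≥1} (1 + q^k)` as a formal power series. -/
noncomputable def Fneg : PowerSeries ℤ :=
  iProd fun k => 1 + (PowerSeries.X : PowerSeries ℤ) ^ (k + 1)

/-- Multiplicative inverse of a power series with constant coefficient `1`. -/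
noncomputable def psInv (f : PowerSeries ℤ) : PowerSeries ℤ := PowerSeries.invOfUnit f 1
/-- `a n` is the coefficient of `q^n` in `(-q;q)_∞^2 / (q;q)_∞`. -/
noncomputable def a (n : ℕ) : ℤ := PowerSeries.coeff n (Fneg ^ 2 * psInv (F 1))
/-- Generalized pentagonal numbers: `gp (2m) = m(3m+1)/2` and `gp (2m-1) = m(3m-1)/2`. -/
def gp (n : ℕ) : ℕ :=
  if Even n then (n / 2) * (3 * (n / 2) + 1) / 2
  else ((n + 1) / 2) * (3 * ((n + 1) / 2) - 1) / 2

/-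
Modulo 4 we have `(1 + q^k)^2 ≡ (1 - q^k)^2`, so `(-q;q)∞^2 ≡ (q;q)∞^2` and hence
`a(n) ≡ [q^n] (q;q)∞ (mod 4)`. By Euler's pentagonal number theorem the coefficient of `q^{ω_n}`
in `(q;q)∞` is `(-1)^⌈n/2⌉`, which is `1` exactly when `n ≡ 0, 3 (mod 4)`.
-/

theorem coeff_eq_of_X_pow_dvd_sub {R : Type*} [CommRing R] {n : ℕ} {f g : R⟦X⟧}
    (h : X ^ (n + 1) ∣ f - g) : coeff n f = coeff n g := by
  rw [← sub_eq_zero, ← map_sub]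
  exact X_pow_dvd_iff.mp h n (Nat.lt_succ_self n)

theorem dvd_prod_sub_one {R ι : Type*} [CommRing R] {s : Finset ι} {d : R} {f : ι → R}
    (h : ∀ i ∈ s, d ∣ f i - 1) : d ∣ ∏ i ∈ s, f i - 1 := by
  induction s using Finset.cons_induction with
  | empty => simp
  | cons i s _ ih =>
    rw [prod_cons, show f i * ∏ j ∈ s, f j - 1 = f i * (∏ j ∈ s, f j - 1) + (f i - 1) by ring]
    exact dvd_add (dvd_mul_of_dvd_right (ih fun j hj => h j (mem_cons_of_mem hj)) _)
      (h i (mem_cons_self i s))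

theorem one_add_sq_eq_one_sub_sq {R : Type*} [CommRing R] (h4 : (4 : R) = 0) (x : R) :
    (1 + x) ^ 2 = (1 - x) ^ 2 := by
  linear_combination x * h4

section iProd

variable {g : ℕ → ℤ⟦X⟧}

theorem X_pow_dvd_prod_sub_prod_range (hg : ∀ k, X ^ (k + 1) ∣ g k - 1) {n : ℕ} {s : Finset ℕ}
    (hs : range (n + 1) ⊆ s) :
    X ^ (n + 1) ∣ ∏ k ∈ s, g k - ∏ k ∈ range (n + 1), g k := by
  rw [← prod_sdiff hs, ← sub_one_mul]
  refine dvd_mul_of_dvd_left (dvd_prod_sub_one fun k hk => ?_) _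
  have hnk : n + 1 ≤ k := by simpa using (mem_sdiff.mp hk).2
  exact (pow_dvd_pow X (by omega)).trans (hg k)

theorem coeff_iProd_eq_coeff_prod (hg : ∀ k, X ^ (k + 1) ∣ g k - 1) {n : ℕ} {s : Finset ℕ}
    (hs : range (n + 1) ⊆ s) : coeff n (iProd g) = coeff n (∏ k ∈ s, g k) := by
  rw [iProd, coeff_mk]
  exact (coeff_eq_of_X_pow_dvd_sub (X_pow_dvd_prod_sub_prod_range hg hs)).symm

theorem X_pow_dvd_iProd_sub_prod (hg : ∀ k, X ^ (k + 1) ∣ g k - 1) (n : ℕ) :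
    X ^ (n + 1) ∣ iProd g - ∏ k ∈ range (n + 1), g k := by
  refine X_pow_dvd_iff.mpr fun m hm => ?_
  rw [map_sub, coeff_iProd_eq_coeff_prod hg (range_subset_range.mpr hm), sub_self]

theorem iProd_eq_of_eventually_coeff_prod_eq (hg : ∀ k, X ^ (k + 1) ∣ g k - 1) {f : ℤ⟦X⟧}
    (h : ∀ n, ∀ᶠ s in Filter.atTop, coeff n (∏ k ∈ s, g k) = coeff n f) : iProd g = f := by
  ext n
  obtain ⟨s, hs⟩ := Filter.eventually_atTop.mp (h n)
  rw [coeff_iProd_eq_coeff_prod hg (subset_union_right (s₁ := s)), hs _ subset_union_left]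

theorem coeff_map_iProd_sq {R : Type*} [CommRing R] (φ : ℤ →+* R)
    (hg : ∀ k, X ^ (k + 1) ∣ g k - 1) (n : ℕ) :
    coeff n (map φ (iProd g) ^ 2) = coeff n ((∏ k ∈ range (n + 1), map φ (g k)) ^ 2) := by
  have h : X ^ (n + 1) ∣ map φ (iProd g) - ∏ k ∈ range (n + 1), map φ (g k) := by
    simpa using map_dvd (map φ) (X_pow_dvd_iProd_sub_prod hg n)
  exact coeff_eq_of_X_pow_dvd_sub (h.trans (sub_dvd_pow_sub_pow _ _ 2))

end iProd

theorem X_pow_dvd_one_sub_X_pow_sub_one (k : ℕ) :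
    (X : ℤ⟦X⟧) ^ (k + 1) ∣ (1 - X ^ (k + 1)) - 1 :=
  ⟨-1, by ring⟩

theorem X_pow_dvd_one_add_X_pow_sub_one (k : ℕ) :
    (X : ℤ⟦X⟧) ^ (k + 1) ∣ (1 + X ^ (k + 1)) - 1 :=
  ⟨1, by ring⟩

theorem F_one : F 1 = iProd fun k => 1 - X ^ (k + 1) := by
  simp only [F, one_mul]

theorem F_one_eq_pentagonalSeries : F 1 = pentagonalSeries ℤ := by
  rw [F_one]
  exact iProd_eq_of_eventually_coeff_prod_eq X_pow_dvd_one_sub_X_pow_sub_one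
    (coeff_prod_one_sub_X_pow_eventually_eq ℤ)

theorem F_one_mul_psInv : F 1 * psInv (F 1) = 1 := by
  refine mul_invOfUnit _ _ ?_
  rw [← coeff_zero_eq_constantCoeff_apply, F, iProd, coeff_mk]
  simp

theorem map_Fneg_sq_eq_map_F_one_sq :
    map (Int.castRingHom (ZMod 4)) Fneg ^ 2 = map (Int.castRingHom (ZMod 4)) (F 1) ^ 2 := by
  ext n
  rw [Fneg, F_one, coeff_map_iProd_sq _ X_pow_dvd_one_add_X_pow_sub_one,
    coeff_map_iProd_sq _ X_pow_dvd_one_sub_X_pow_sub_one, ← prod_pow, ← prod_pow]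
  have h4 : (4 : (ZMod 4)⟦X⟧) = 0 := by
    rw [← map_ofNat C 4, show (4 : ZMod 4) = 0 from rfl, map_zero]
  refine congrArg (coeff n) (prod_congr rfl fun k _ => ?_)
  simpa only [map_add, map_sub, map_one, map_pow, map_X] using one_add_sq_eq_one_sub_sq h4 _

theorem intCast_a_eq_intCast_coeff_F_one (n : ℕ) :
    (a n : ZMod 4) = ((coeff n (F 1) : ℤ) : ZMod 4) := by
  have h : map (Int.castRingHom (ZMod 4)) (Fneg ^ 2 * psInv (F 1)) =
      map (Int.castRingHom (ZMod 4)) (F 1) := by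
    rw [map_mul, map_pow, map_Fneg_sq_eq_map_F_one_sq, sq, mul_assoc, ← map_mul, F_one_mul_psInv,
      map_one, mul_one]
  rw [a, ← eq_intCast (Int.castRingHom (ZMod 4)), ← coeff_map, h, coeff_map, eq_intCast]

theorem gp_two_mul (m : ℕ) : gp (2 * m) = pentagonal (-m) := by
  rw [← Int.natCast_inj, natCast_pentagonal]
  simp [gp]
  ring_nf

theorem gp_two_mul_add_one (m : ℕ) : gp (2 * m + 1) = pentagonal (m + 1) := by
  rw [← Int.natCast_inj, natCast_pentagonal, gp, if_neg (by simp),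
    show (2 * m + 1 + 1) / 2 = m + 1 by omega, show 3 * (m + 1) - 1 = 3 * m + 2 by omega]
  push_cast
  ring_nf

theorem coeff_gp_F_one (n : ℕ) : coeff (gp n) (F 1) = (-1) ^ ((n + 1) / 2) := by
  rw [F_one_eq_pentagonalSeries]
  obtain ⟨m, rfl | rfl⟩ := Nat.even_or_odd' n
  · rw [gp_two_mul, coeff_pentagonalSeries_pentagonal, Int.negOnePow_neg,
      Int.cast_negOnePow_natCast, show (2 * m + 1) / 2 = m by omega]
  · rw [gp_two_mul_add_one, coeff_pentagonalSeries_pentagonal, ← Nat.cast_succ,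
      Int.cast_negOnePow_natCast, show (2 * m + 1 + 1) / 2 = m + 1 by omega]

theorem emod_four_of_intCast_eq_neg_one_pow {z : ℤ} {m : ℕ}
    (h : (z : ZMod 4) = ((-1) ^ m : ℤ)) : z % 4 = if Even m then 1 else 3 := by
  rcases Nat.even_or_odd m with hm | hm
  · rw [hm.neg_one_pow, ZMod.intCast_eq_intCast_iff'] at h
    simpa [hm] using h
  · rw [hm.neg_one_pow, ZMod.intCast_eq_intCast_iff'] at h
    simpa [Nat.not_even_iff_odd.mpr hm] using h

/-- `a(ω_n) ≡ 1 (mod 4)` iff `n ≡ 0, 3 (mod 4)`, and `a(ω_n) ≡ 3 (mod 4)`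
iff `n ≡ 1, 2 (mod 4)`. -/
theorem a_pentagonal_mod_four (n : ℕ) :
    ((n % 4 = 0 ∨ n % 4 = 3) → a (gp n) % 4 = 1) ∧
      ((n % 4 = 1 ∨ n % 4 = 2) → a (gp n) % 4 = 3) := by
  have h := intCast_a_eq_intCast_coeff_F_one (gp n)
  rw [coeff_gp_F_one] at h
  have h4 := emod_four_of_intCast_eq_neg_one_pow h
  simp only [Nat.even_iff] at h4
  constructor <;> intro hn <;> split_ifs at h4 <;> omega
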